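/- arXiv:2205.02993 — 4 statements merged into one kernel-verified Lean document; each statement's English description precedes it below -/
import Mathlib

section
/- Let v be a vertex of a tree T on at least 3 vertices, and let S = {v, x, y} be a 3-subset containing v that maximizes the Steiner distance d(S), chosen so that the v,x-path P is a longest path in T starting from v. Then the distance from y to the path P equals the maximum over all vertices u of T of the distance from u to P. -/
open SimpleGraph Finset

/-- The Steiner distance of a vertex set `S` in `G`: the minimum number of edges of a
connected subgraph of `G` whose vertex set contains `S`. -/
noncomputable def steinerDist {V : Type*} [Fintype V] (G : SimpleGraph V) (S : Set V) : ℕ :=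
  sInf {n | ∃ H : G.Subgraph, H.Connected ∧ S ⊆ H.verts ∧ H.edgeSet.ncard = n}

/-- The Steiner 3-eccentricity of a vertex `v`: the maximum Steiner distance over
3-subsets of vertices containing `v`. -/
noncomputable def ecc3 {V : Type*} [Fintype V] [DecidableEq V] (G : SimpleGraph V) (v : V) : ℕ :=
  sSup {n | ∃ S : Finset V, v ∈ S ∧ S.card = 3 ∧ steinerDist G (S : Set V) = n}

/-- The average Steiner 3-eccentricity of `G`. -/
noncomputable def aecc3 {V : Type*} [Fintype V] [DecidableEq V] (G : SimpleGraph V) : ℚ :=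
  (∑ v : V, (ecc3 G v : ℚ)) / (Fintype.card V : ℚ)

/-- A walk is a segment if it is a nontrivial path whose endpoints do not have degree 2
and all of whose internal vertices have degree 2. -/
def IsSegment {V : Type*} [Fintype V] (G : SimpleGraph V) [DecidableRel G.Adj] {u v : V}
    (p : G.Walk u v) : Prop :=
  p.IsPath ∧ 0 < p.length ∧ G.degree u ≠ 2 ∧ G.degree v ≠ 2 ∧
    ∀ w ∈ p.support, w ≠ u → w ≠ v → G.degree w = 2

/-- `G` has segment sequence `l`: its edge set is partitioned into segments whose
lengths are given by `l`. -/
def HasSegmentSequence {V : Type*} [Fintype V] (G : SimpleGraph V) [DecidableRel G.Adj]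
    {m : ℕ} (l : Fin m → ℕ) : Prop :=
  ∃ (u v : Fin m → V) (p : ∀ i, G.Walk (u i) (v i)),
    (∀ i, IsSegment G (p i)) ∧
    (∀ i j, i ≠ j → ∀ e ∈ (p i).edges, e ∉ (p j).edges) ∧
    (∀ e ∈ G.edgeSet, ∃ i, e ∈ (p i).edges) ∧
    (∀ i, (p i).length = l i)

/-- A caterpillar: a tree whose internal (non-leaf) vertices induce a path. -/
def IsCaterpillar {V : Type*} [Fintype V] (G : SimpleGraph V) [DecidableRel G.Adj] : Prop :=
  G.IsTree ∧ ∃ k : ℕ, Nonempty ((G.induce {v | 2 ≤ G.degree v}) ≃g SimpleGraph.pathGraph k)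

/-- Majorization of finite sequences. -/
def Majorizes {n : ℕ} (x y : Fin n → ℕ) : Prop :=
  (∀ k : ℕ, k < n →
    ∑ i ∈ Finset.univ.filter (fun i : Fin n => (i : ℕ) < k), y i ≤
    ∑ i ∈ Finset.univ.filter (fun i : Fin n => (i : ℕ) < k), x i) ∧
  ∑ i, x i = ∑ i, y i

/-- Distance from a vertex `u` to (the support of) a walk `p`. -/
noncomputable def distToPath {V : Type*} (G : SimpleGraph V) {a b : V} (p : G.Walk a b)
    (u : V) : ℕ :=
  sInf {n | ∃ w ∈ p.support, G.dist u w = n}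

/-- The eccentricity of a walk `p`: the maximum distance from a vertex to `p`. -/
noncomputable def eccPath {V : Type*} [Fintype V] (G : SimpleGraph V) {a b : V}
    (p : G.Walk a b) : ℕ :=
  sSup {n | ∃ u : V, distToPath G p u = n}

/-- `G` is a broom `B_{n,Δ}`: obtained from a path on `n - Δ + 2` vertices by attaching
`Δ - 2` pendant vertices to an internal vertex of the path. -/
def IsBroom {V : Type*} [Fintype V] (G : SimpleGraph V) (Δ : ℕ) : Prop :=
  ∃ (a b c : V) (p : G.Walk a b), p.IsPath ∧
    p.support.length = Fintype.card V - Δ + 2 ∧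
    c ∈ p.support ∧ c ≠ a ∧ c ≠ b ∧ ∀ v, v ∉ p.support → G.Adj c v

/-!
In a tree, the smallest subtree containing the ends of a path `P` and a vertex `u` is `P`
together with a shortest path from `u` to `P`; that path meets `P` only in its last vertex, so
`d({a, b, u}) = |P| + d(u, P)`. As `{v, x, y}` maximizes the Steiner distance among the triples
containing `v`, the vertex `y` maximizes `d(·, P)`.
-/

section

variable {V : Type*} {G : SimpleGraph V}

lemma distToPath_le_dist {a b u z : V} (p : G.Walk a b) (hz : z ∈ p.support) :
    distToPath G p u ≤ G.dist u z :=
  Nat.sInf_le ⟨z, hz, rfl⟩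

lemma exists_mem_support_dist_eq_distToPath {a b : V} (p : G.Walk a b) (u : V) :
    ∃ w ∈ p.support, G.dist u w = distToPath G p u :=
  Nat.sInf_mem (s := {n | ∃ w ∈ p.support, G.dist u w = n}) ⟨_, a, p.start_mem_support, rfl⟩

lemma distToPath_eq_zero_of_mem_support {a b u : V} (p : G.Walk a b) (hu : u ∈ p.support) :
    distToPath G p u = 0 :=
  Nat.eq_zero_of_le_zero (by simpa using distToPath_le_dist (u := u) p hu)

lemma eq_of_mem_support_of_length_eq_distToPath {a b u w z : V} (p : G.Walk a b)
    (r : G.Walk u w) (hr : r.length = distToPath G p u) (hzr : z ∈ r.support)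
    (hzp : z ∈ p.support) : z = w := by
  classical
  by_contra hzw
  have hsplit : (r.takeUntil z hzr).length + (r.dropUntil z hzr).length = r.length := by
    rw [← Walk.length_append, Walk.take_spec]
  have hdrop : (r.dropUntil z hzr).length ≠ 0 := fun h => hzw (Walk.eq_of_length_eq_zero h)
  have htake : distToPath G p u ≤ (r.takeUntil z hzr).length :=
    (distToPath_le_dist p hzp).trans (dist_le _)
  omega

lemma disjoint_edgeSet_of_length_eq_distToPath {a b u w : V} (p : G.Walk a b)
    (r : G.Walk u w) (hr : r.length = distToPath G p u) : Disjoint p.edgeSet r.edgeSet := by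
  rw [Set.disjoint_left]
  intro e hep her
  induction e using Sym2.ind with
  | _ c d =>
    have hc := eq_of_mem_support_of_length_eq_distToPath p r hr
      (r.fst_mem_support_of_mem_edges her) (p.fst_mem_support_of_mem_edges hep)
    have hd := eq_of_mem_support_of_length_eq_distToPath p r hr
      (r.snd_mem_support_of_mem_edges her) (p.snd_mem_support_of_mem_edges hep)
    exact (p.adj_of_mem_edges hep).ne (hc.trans hd.symm)

lemma SimpleGraph.Walk.IsTrail.ncard_edgeSet {a b : V} {p : G.Walk a b} (hp : p.IsTrail) :
    p.edgeSet.ncard = p.length := by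
  classical
  rw [← p.coe_edges_toFinset, Set.ncard_coe_finset, List.toFinset_card_of_nodup hp.edges_nodup,
    p.length_edges]

lemma SimpleGraph.Walk.ncard_edgeSet_toSubgraph_sup {a b c d : V} {p : G.Walk a b}
    {q : G.Walk c d} (hp : p.IsTrail) (hq : q.IsTrail) (hpq : Disjoint p.edgeSet q.edgeSet) :
    (p.toSubgraph ⊔ q.toSubgraph).edgeSet.ncard = p.length + q.length := by
  rw [Subgraph.edgeSet_sup, edgeSet_toSubgraph, edgeSet_toSubgraph,
    Set.ncard_union_eq hpq (List.finite_toSet p.edges) (List.finite_toSet q.edges),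
    hp.ncard_edgeSet, hq.ncard_edgeSet]

lemma SimpleGraph.IsAcyclic.toSubgraph_le (hG : G.IsAcyclic) {H : G.Subgraph}
    (hH : H.Connected) {a b : V} (ha : a ∈ H.verts) (hb : b ∈ H.verts) {p : G.Walk a b}
    (hp : p.IsPath) : p.toSubgraph ≤ H := by
  classical
  obtain ⟨W⟩ := hH.coe ⟨a, ha⟩ ⟨b, hb⟩
  have hpW : p = (W.map H.hom).bypass :=
    congrArg Subtype.val <|
      (hG.subsingleton_path a b).elim ⟨p, hp⟩ ⟨_, (W.map H.hom).bypass_isPath⟩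
  calc p.toSubgraph ≤ (W.map H.hom).toSubgraph := hpW ▸ Walk.toSubgraph_bypass_le_toSubgraph
    _ = W.toSubgraph.map H.hom := Walk.toSubgraph_map _ _
    _ ≤ H := Subgraph.coeSubgraph_le _

variable [Fintype V]

lemma steinerDist_le_ncard_edgeSet (hG : G.Connected) (S : Set V) :
    steinerDist G S ≤ G.edgeSet.ncard := by
  refine Nat.sInf_le ⟨⊤, ?_, by simp, by rw [Subgraph.edgeSet_top]⟩
  rw [Subgraph.connected_iff']
  exact Subgraph.topIso.connected_iff.mpr hG

lemma steinerDist_le_ecc3 [DecidableEq V] (hG : G.Connected) {v : V} {S : Finset V}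
    (hv : v ∈ S) (hS : S.card = 3) : steinerDist G S ≤ ecc3 G v := by
  refine le_csSup ⟨G.edgeSet.ncard, ?_⟩ ⟨S, hv, hS, rfl⟩
  rintro _ ⟨T, -, -, rfl⟩
  exact steinerDist_le_ncard_edgeSet hG _

lemma SimpleGraph.IsTree.steinerDist_eq_length_add_distToPath (hT : G.IsTree) {a b : V}
    (p : G.Walk a b) (hp : p.IsPath) (u : V) :
    steinerDist G {a, b, u} = p.length + distToPath G p u := by
  obtain ⟨w, hw, hdist⟩ := exists_mem_support_dist_eq_distToPath p u
  obtain ⟨r, hr, hrlen⟩ := hT.connected.exists_path_of_dist u w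
  rw [hdist] at hrlen
  have hcard : (p.toSubgraph ⊔ r.toSubgraph).edgeSet.ncard = p.length + distToPath G p u := by
    rw [Walk.ncard_edgeSet_toSubgraph_sup hp.isTrail hr.isTrail
      (disjoint_edgeSet_of_length_eq_distToPath p r hrlen), hrlen]
  refine IsLeast.csInf_eq ⟨⟨p.toSubgraph ⊔ r.toSubgraph, ?_, ?_, hcard⟩, ?_⟩
  · exact Subgraph.connected_sup p.toSubgraph_connected.preconnected
      r.toSubgraph_connected.preconnected
      ⟨w, (p.mem_verts_toSubgraph).mpr hw, r.end_mem_verts_toSubgraph⟩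
  · rintro z (rfl | rfl | rfl)
    · exact Or.inl p.start_mem_verts_toSubgraph
    · exact Or.inl p.end_mem_verts_toSubgraph
    · exact Or.inr r.start_mem_verts_toSubgraph
  · rintro _ ⟨H, hH, hsub, rfl⟩
    have hpH : p.toSubgraph ≤ H := hT.isAcyclic.toSubgraph_le hH (hsub (by simp))
      (hsub (by simp)) hp
    have hwH : w ∈ H.verts := hpH.1 ((p.mem_verts_toSubgraph).mpr hw)
    have hrH : r.toSubgraph ≤ H := hT.isAcyclic.toSubgraph_le hH (hsub (by simp)) hwH hr
    rw [← hcard]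
    exact Set.ncard_le_ncard (Subgraph.edgeSet_mono (sup_le hpH hrH))

end

theorem stmt_6_general {V : Type*} [Fintype V] [DecidableEq V] (G : SimpleGraph V)
    (hT : G.IsTree)
    (v x y : V) (hvx : v ≠ x)
    (hS : steinerDist G {v, x, y} = ecc3 G v)
    (P : G.Walk v x) (hP : P.IsPath) :
    distToPath G P y = eccPath G P := by
  have hsteiner := hT.steinerDist_eq_length_add_distToPath P hP
  have hmax : ∀ u, distToPath G P u ≤ distToPath G P y := by
    intro u
    by_cases hu : u = v ∨ u = x
    · rcases hu with rfl | rfl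
      · simp [distToPath_eq_zero_of_mem_support P P.start_mem_support]
      · simp [distToPath_eq_zero_of_mem_support P P.end_mem_support]
    push Not at hu
    have hcard : ({v, x, u} : Finset V).card = 3 :=
      Finset.card_eq_three.mpr ⟨v, x, u, hvx, hu.1.symm, hu.2.symm, rfl⟩
    have hle := steinerDist_le_ecc3 (v := v) hT.connected (by simp) hcard
    rw [Finset.coe_insert, Finset.coe_insert, Finset.coe_singleton, hsteiner, ← hS,
      hsteiner] at hle
    omega
  exact (IsGreatest.csSup_eq (s := {n | ∃ u, distToPath G P u = n})
    ⟨⟨y, rfl⟩, by rintro _ ⟨u, rfl⟩; exact hmax u⟩).symm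

theorem stmt_6 {V : Type*} [Fintype V] [DecidableEq V] (G : SimpleGraph V) [DecidableRel G.Adj]
    (hT : G.IsTree) (hn : 3 ≤ Fintype.card V)
    (v x y : V) (hvx : v ≠ x) (hvy : v ≠ y) (hxy : x ≠ y)
    (hS : steinerDist G {v, x, y} = ecc3 G v)
    (P : G.Walk v x) (hP : P.IsPath)
    (hlong : ∀ (z : V) (Q : G.Walk v z), Q.IsPath → Q.length ≤ P.length) :
    distToPath G P y = eccPath G P :=
  stmt_6_general G hT v x y hvx hS P hP
end

section
/- Let T be a caterpillar on n vertices whose spine consists of k vertices (k ≥ 1, each spine vertex has degree at least 2 and maximum degree at least 3). Then every spine vertex v satisfies ecc_3(v,T) = k + 1, every leaf v satisfies ecc_3(v,T) = k + 2, and consequently aecc_3(T) = ((n-1)k + 2n)/n. -/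
open SimpleGraph Finset

/-!
In a tree a connected subgraph on `m` vertices has `m - 1` edges, so `steinerDist G S + 1` is the
size of the smallest subtree containing `S`. Deleting leaves keeps a tree connected, so the spine
together with `S` spans a subtree and `steinerDist G S + 1 ≤ #(S ∪ spine)`. Let `p` and `q` be
leaves hanging from the two ends of the spine: the path from `p` to `q` runs through the whole
spine and lies in every subtree containing `p` and `q`, so equality holds as soon as `p, q ∈ S`.
For a spine vertex `v` the maximum `k + 1` is attained at `{v, p, q}`; for a leaf `v` the maximum
`k + 2` is attained at three leaves containing `v`, `p` and `q`, which exist because, by the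
handshake lemma, a tree with a vertex of degree at least 3 has at least three leaves.
-/

namespace SimpleGraph

variable {V : Type*} {G : SimpleGraph V}

theorem IsTree.ncard_edgeSet_add_one [Finite V] (hT : G.IsTree) {H : G.Subgraph}
    (hH : H.Connected) : H.edgeSet.ncard + 1 = H.verts.ncard := by
  have hcard := (isTree_iff_connected_and_card.mp ⟨hH.coe, hT.isAcyclic.subgraph H⟩).2
  rw [← Subgraph.image_coe_edgeSet_coe,
    Set.ncard_image_of_injective _ (Sym2.map.injective Subtype.val_injective)]
  simpa [Nat.card_coe_set_eq] using hcard

theorem IsTree.support_subset_verts (hT : G.IsTree) {a b : V} {P : G.Walk a b} (hP : P.IsPath)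
    {H : G.Subgraph} (hH : H.Connected) (ha : a ∈ H.verts) (hb : b ∈ H.verts) :
    {x | x ∈ P.support} ⊆ H.verts := by
  classical
  obtain ⟨W⟩ := hH.coe.preconnected ⟨a, ha⟩ ⟨b, hb⟩
  have hPW : P = (W.map H.hom).bypass :=
    (hT.existsUnique_path a b).unique hP (Walk.bypass_isPath _)
  intro x hx
  obtain ⟨y, -, rfl⟩ := List.mem_map.mp <|
    (Walk.support_map H.hom W ▸ Walk.support_bypass_subset_support _ (hPW ▸ hx))
  exact y.2

theorem pathGraph_exists_isPath_from_zero (n : ℕ) (j : Fin (n + 1)) :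
    ∃ P : (pathGraph (n + 1)).Walk 0 j, P.IsPath ∧ ∀ i, i ∈ P.support ↔ i ≤ j := by
  induction j using Fin.induction with
  | zero => exact ⟨.nil, .nil, by simp⟩
  | succ j ih =>
    obtain ⟨P, hP, hsupp⟩ := ih
    have hadj : (pathGraph (n + 1)).Adj j.castSucc j.succ := by simp [pathGraph_adj]
    refine ⟨P.concat hadj, hP.concat (by simp [hsupp, Fin.le_def]) hadj, fun i => ?_⟩
    simp only [Walk.support_concat, List.mem_append, List.mem_singleton, hsupp, Fin.le_def,
      Fin.ext_iff, Fin.val_castSucc, Fin.val_succ]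
    omega

section Steiner

variable [Fintype V]

theorem IsTree.steinerDist_add_one_le [DecidableRel G.Adj] (hT : G.IsTree) {S X : Set V}
    (hSX : S ⊆ X) (hX : {v | 2 ≤ G.degree v} ⊆ X) (hXne : X.Nonempty) :
    steinerDist G S + 1 ≤ X.ncard := by
  have hleaves : ∀ v ∉ X, (G.neighborSet v).Subsingleton := fun v hv a ha b hb => by
    by_contra hab
    have h2 : 1 < #(G.neighborFinset v) :=
      one_lt_card.mpr ⟨a, by simpa using ha, b, by simpa using hb, hab⟩
    exact hv (hX (show 2 ≤ G.degree v by rwa [← card_neighborFinset_eq_degree]))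
  have := hXne.to_subtype
  have hconn : ((⊤ : G.Subgraph).induce X).Connected :=
    connected_induce_iff.mp (.mk (hT.connected.preconnected.induce_of_degree_eq_one hleaves))
  calc steinerDist G S + 1 ≤ ((⊤ : G.Subgraph).induce X).edgeSet.ncard + 1 := by
        gcongr
        exact Nat.sInf_le ⟨_, hconn, hSX, rfl⟩
    _ = X.ncard := hT.ncard_edgeSet_add_one hconn

theorem IsTree.ncard_le_steinerDist_add_one (hT : G.IsTree) {S X : Set V}
    (hX : ∀ H : G.Subgraph, H.Connected → S ⊆ H.verts → X ⊆ H.verts) :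
    X.ncard ≤ steinerDist G S + 1 := by
  have htop : (⊤ : G.Subgraph).Connected :=
    Subgraph.connected_iff'.mpr (Subgraph.topIso.connected_iff.mpr hT.connected)
  obtain ⟨H, hH, hSH, hcard⟩ := Nat.sInf_mem (s := {n | ∃ H : G.Subgraph, H.Connected ∧
    S ⊆ H.verts ∧ H.edgeSet.ncard = n}) ⟨_, ⊤, htop, Set.subset_univ S, rfl⟩
  calc X.ncard ≤ H.verts.ncard := Set.ncard_le_ncard (hX H hH hSH)
    _ = steinerDist G S + 1 := by rw [← hT.ncard_edgeSet_add_one hH, hcard, steinerDist]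

end Steiner

theorem IsTree.three_le_card_degree_lt_two [Fintype V] [DecidableRel G.Adj] (hT : G.IsTree)
    (hΔ : ∃ v, 3 ≤ G.degree v) : 3 ≤ #{v | G.degree v < 2} := by
  obtain ⟨u, hu⟩ := hΔ
  obtain ⟨w, huw⟩ := G.degree_pos_iff_exists_adj u |>.mp (by omega)
  have : Nontrivial V := ⟨u, w, huw.ne⟩
  have hpos := hT.connected.preconnected.degree_pos_of_nontrivial
  have hsum := G.sum_degrees_eq_twice_card_edges
  have hedges := hT.card_edgeFinset
  rw [← sum_filter_add_sum_filter_not univ (fun v => 2 ≤ G.degree v)] at hsum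
  have hinternal : ∑ v ∈ {v | 2 ≤ G.degree v}, 2 < ∑ v ∈ {v | 2 ≤ G.degree v}, G.degree v :=
    sum_lt_sum (fun v hv => (mem_filter.mp hv).2)
      ⟨u, mem_filter.mpr ⟨mem_univ u, by omega⟩, by omega⟩
  have hleaves :
      ∑ v ∈ {v | ¬ 2 ≤ G.degree v}, 1 ≤ ∑ v ∈ {v | ¬ 2 ≤ G.degree v}, G.degree v :=
    sum_le_sum fun v _ => hpos v
  have hcard := card_filter_add_card_filter_not (s := univ) (fun v => 2 ≤ G.degree v)
  simp only [sum_const, smul_eq_mul, mul_one, not_le, card_univ] at hinternal hleaves hcard hsum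
  omega

section Spine

variable {s : Set V} {n : ℕ}

theorem exists_isPath_of_iso_pathGraph (e : G.induce s ≃g pathGraph (n + 1)) {p q : V}
    (hp : G.Adj p (e.symm 0)) (hq : G.Adj (e.symm (Fin.last n)) q) (hps : p ∉ s) (hqs : q ∉ s)
    (hpq : p ≠ q) : ∃ P : G.Walk p q, P.IsPath ∧ s ⊆ {x | x ∈ P.support} := by
  let φ : pathGraph (n + 1) ↪g G := (Embedding.induce s).comp e.symm.toEmbedding
  obtain ⟨P, hP, hsupp⟩ := pathGraph_exists_isPath_from_zero n (Fin.last n)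
  let W : G.Walk (φ 0) (φ (Fin.last n)) := P.map φ.toHom
  have hWs : ∀ x, x ∈ W.support ↔ x ∈ s := fun x => by
    simp only [W, Walk.support_map, List.mem_map, hsupp, Fin.le_last, true_and]
    refine ⟨?_, fun hx => ⟨e ⟨x, hx⟩, by simp [φ]⟩⟩
    rintro ⟨i, rfl⟩
    exact (e.symm i).2
  have hW : W.IsPath := hP.map (f := φ.toHom) φ.injective
  have hp' : G.Adj p (φ 0) := hp
  have hq' : G.Adj (φ (Fin.last n)) q := hq
  refine ⟨.cons hp' (W.concat hq'), (hW.concat ?_ hq').cons ?_, fun x hx => ?_⟩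
  · rwa [hWs]
  · simp only [Walk.support_concat, List.mem_append, hWs, List.mem_singleton, not_or]
    exact ⟨hps, hpq⟩
  · simp only [Set.mem_ofPred_eq, Walk.support_cons, Walk.support_concat, List.mem_cons,
      List.mem_append, hWs]
    exact Or.inr (Or.inl hx)

variable [Fintype V] [DecidableRel G.Adj] {k : ℕ}

theorem card_filter_two_le_degree (e : G.induce {v | 2 ≤ G.degree v} ≃g pathGraph k) :
    #{v | 2 ≤ G.degree v} = k := by
  rw [← Fintype.card_subtype, ← Fintype.card_fin k]
  exact Fintype.card_congr e.toEquiv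

theorem exists_adj_notMem_of_iso_pathGraph (e : G.induce s ≃g pathGraph k) (i : Fin k)
    {T : Finset V} (hcard : #T < G.degree (e.symm i))
    (hnbrs : ∀ j, (pathGraph k).Adj i j → (e.symm j : V) ∈ T) :
    ∃ x, G.Adj (e.symm i) x ∧ x ∉ s ∧ x ∉ T := by
  obtain ⟨x, hx, hxT⟩ := exists_mem_notMem_of_card_lt_card
    (s := T) (t := G.neighborFinset (e.symm i)) (by rwa [card_neighborFinset_eq_degree])
  rw [mem_neighborFinset] at hx
  refine ⟨x, hx, fun hxs => hxT ?_, hxT⟩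
  have hadj : (pathGraph k).Adj i (e ⟨x, hxs⟩) := by
    rw [← e.symm.map_adj_iff]
    simpa using hx
  simpa using hnbrs _ hadj

theorem exists_leaves_adj_ends_of_iso_pathGraph
    (e : G.induce {v | 2 ≤ G.degree v} ≃g pathGraph (n + 1)) :
    ∃ p q, G.Adj p (e.symm 0) ∧ G.Adj (e.symm (Fin.last n)) q ∧ G.degree p < 2 ∧
      G.degree q < 2 ∧ p ≠ q := by
  have hdeg : ∀ i, 2 ≤ G.degree (e.symm i) := fun i => (e.symm i).2
  rcases n with _ | n
  · obtain ⟨p, hp, hps, -⟩ := exists_adj_notMem_of_iso_pathGraph e 0 (T := ∅)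
      (card_empty.trans_lt (two_pos.trans_le (hdeg 0)))
      (fun j hj => by rw [pathGraph_adj] at hj; omega)
    obtain ⟨q, hq, hqs, hqp⟩ := exists_adj_notMem_of_iso_pathGraph e 0 (T := {p})
      ((card_singleton _).trans_lt (hdeg 0)) (fun j hj => by rw [pathGraph_adj] at hj; omega)
    exact ⟨p, q, hp.symm, hq, not_le.mp hps, not_le.mp hqs, fun h => hqp (by simp [h])⟩
  · obtain ⟨p, hp, hps, -⟩ := exists_adj_notMem_of_iso_pathGraph e 0 (T := {(e.symm 1 : V)})
      ((card_singleton _).trans_lt (hdeg 0)) (fun j hj => by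
        rw [pathGraph_adj] at hj
        obtain rfl : j = 1 := Fin.ext (by simp only [Fin.val_zero, Fin.val_one] at hj ⊢; omega)
        simp)
    obtain ⟨q, hq, hqs, -⟩ := exists_adj_notMem_of_iso_pathGraph e (Fin.last (n + 1))
      (T := {(e.symm (Fin.last n).castSucc : V)}) ((card_singleton _).trans_lt (hdeg _))
      (fun j hj => by
        rw [pathGraph_adj] at hj
        obtain rfl : j = (Fin.last n).castSucc :=
          Fin.ext (by simp only [Fin.val_last, Fin.val_castSucc] at hj ⊢; omega)
        simp)
    refine ⟨p, q, hp.symm, hq, not_le.mp hps, not_le.mp hqs, ?_⟩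
    rintro rfl
    have hends : (e.symm 0 : V) ≠ e.symm (Fin.last (n + 1)) := by
      simp [Subtype.ext_iff.not.symm, Fin.ext_iff]
    have h2 : 1 < #(G.neighborFinset p) :=
      one_lt_card.mpr ⟨_, by simpa using hp.symm, _, by simpa using hq.symm, hends⟩
    rw [card_neighborFinset_eq_degree] at h2
    exact hps h2

end Spine

section Caterpillar

variable [Fintype V] [DecidableEq V] [DecidableRel G.Adj]

theorem IsTree.steinerDist_add_one_le_card_union (hT : G.IsTree) {S : Finset V}
    (hS : S.Nonempty) : steinerDist G S + 1 ≤ #(S ∪ ({v | 2 ≤ G.degree v} : Finset V)) := by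
  rw [← Set.ncard_coe_finset]
  exact hT.steinerDist_add_one_le (by simp) (by intro v hv; simp_all)
    (coe_nonempty.mpr (hS.mono subset_union_left))

variable {p q : V} {P : G.Walk p q}

theorem IsTree.steinerDist_add_one_eq_card_union (hT : G.IsTree) (hP : P.IsPath)
    (hPspine : {v | 2 ≤ G.degree v} ⊆ {x | x ∈ P.support}) {S : Finset V} (hp : p ∈ S)
    (hq : q ∈ S) : steinerDist G S + 1 = #(S ∪ ({v | 2 ≤ G.degree v} : Finset V)) := by
  refine (hT.steinerDist_add_one_le_card_union ⟨p, hp⟩).antisymm ?_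
  rw [← Set.ncard_coe_finset]
  refine hT.ncard_le_steinerDist_add_one fun H hH hSH => ?_
  rw [coe_union, coe_filter_univ]
  exact Set.union_subset hSH
    (hPspine.trans (hT.support_subset_verts hP hH (hSH hp) (hSH hq)))

theorem IsTree.ecc3_of_two_le_degree (hT : G.IsTree) (hP : P.IsPath)
    (hPspine : {v | 2 ≤ G.degree v} ⊆ {x | x ∈ P.support}) (hp : G.degree p < 2)
    (hq : G.degree q < 2) (hpq : p ≠ q) {v : V} (hv : 2 ≤ G.degree v) :
    ecc3 G v = #{v | 2 ≤ G.degree v} + 1 := by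
  have hvp : v ≠ p := by rintro rfl; omega
  have hvq : v ≠ q := by rintro rfl; omega
  have hS3 : #{v, p, q} = 3 := card_eq_three.mpr ⟨v, p, q, hvp, hvq, hpq, rfl⟩
  refine IsGreatest.csSup_eq ⟨⟨{v, p, q}, by simp, hS3, ?_⟩, ?_⟩
  · have h := hT.steinerDist_add_one_eq_card_union hP hPspine (S := {v, p, q}) (by simp) (by simp)
    have hcard :
        #({v, p, q} ∪ ({v | 2 ≤ G.degree v} : Finset V)) = #{v | 2 ≤ G.degree v} + 2 := by
      rw [insert_union, insert_eq_of_mem (mem_union_right _ (by simpa using hv)), insert_union,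
        singleton_union, card_insert_of_notMem (by simp [hpq, not_le.mpr hp]),
        card_insert_of_notMem (by simp [not_le.mpr hq])]
    omega
  · rintro _ ⟨S, hvS, hS3, rfl⟩
    have h := hT.steinerDist_add_one_le_card_union ⟨v, hvS⟩
    have hcard : #(S ∪ ({v | 2 ≤ G.degree v} : Finset V)) ≤ #{v | 2 ≤ G.degree v} + 2 := by
      rw [← insert_erase hvS, insert_union, insert_eq_of_mem (by simpa using hv)]
      exact (card_union_le _ _).trans (by rw [card_erase_of_mem hvS, hS3]; omega)
    omega

theorem IsTree.ecc3_of_degree_lt_two (hT : G.IsTree) (hP : P.IsPath)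
    (hPspine : {v | 2 ≤ G.degree v} ⊆ {x | x ∈ P.support}) (hp : G.degree p < 2)
    (hq : G.degree q < 2) (hleaves : 3 ≤ #{v | G.degree v < 2}) {v : V}
    (hv : G.degree v < 2) : ecc3 G v = #{v | 2 ≤ G.degree v} + 2 := by
  obtain ⟨S, hvpqS, hSleaves, hS3⟩ := exists_subsuperset_card_eq (s := {v, p, q}) (n := 3)
    (by simp only [insert_subset_iff, singleton_subset_iff, mem_filter, mem_univ, true_and]
        exact ⟨hv, hp, hq⟩)
    card_le_three hleaves
  refine IsGreatest.csSup_eq ⟨⟨S, hvpqS (by simp), hS3, ?_⟩, ?_⟩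
  · have h := hT.steinerDist_add_one_eq_card_union hP hPspine (S := S) (hvpqS (by simp))
      (hvpqS (by simp))
    have hdisj : Disjoint S ({v | 2 ≤ G.degree v} : Finset V) :=
      (disjoint_filter.mpr fun v _ hv => by omega).mono_left hSleaves
    rw [card_union_of_disjoint hdisj, hS3] at h
    omega
  · rintro _ ⟨S, hvS, hS3, rfl⟩
    have h := hT.steinerDist_add_one_le_card_union ⟨v, hvS⟩
    have := card_union_le S ({v | 2 ≤ G.degree v} : Finset V)
    omega

end Caterpillar

theorem aecc3_eq_of_ecc3_eq [Fintype V] [DecidableEq V] (P : V → Prop) [DecidablePred P]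
    {k : ℕ} (hk : #{v | P v} = k) (hP : ∀ v, P v → ecc3 G v = k + 1)
    (hnP : ∀ v, ¬ P v → ecc3 G v = k + 2) :
    aecc3 G = (((Fintype.card V : ℚ) - 1) * k + 2 * (Fintype.card V : ℚ)) /
      (Fintype.card V : ℚ) := by
  have hcard := card_filter_add_card_filter_not (s := univ) P
  rw [hk, card_univ] at hcard
  have hecc : ∀ v, (ecc3 G v : ℚ) = if P v then (k : ℚ) + 1 else k + 2 := fun v => by
    split_ifs with hv
    · simp [hP v hv]
    · simp [hnP v hv]
  rw [aecc3, sum_congr rfl fun v _ => hecc v, sum_ite, sum_const, sum_const, hk, ← hcard]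
  push_cast
  ring

end SimpleGraph

theorem stmt_8_general {V : Type*} [Fintype V] [DecidableEq V] (G : SimpleGraph V) [DecidableRel G.Adj]
    (hT : G.IsTree) (hΔ : ∃ v, 3 ≤ G.degree v)
    (k : ℕ)
    (hspine : Nonempty ((G.induce {v | 2 ≤ G.degree v}) ≃g SimpleGraph.pathGraph k)) :
    (∀ v, 2 ≤ G.degree v → ecc3 G v = k + 1) ∧
    (∀ v, G.degree v = 1 → ecc3 G v = k + 2) ∧
    aecc3 G = (((Fintype.card V : ℚ) - 1) * k + 2 * (Fintype.card V : ℚ)) /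
      (Fintype.card V : ℚ) := by
  obtain ⟨e⟩ := hspine
  obtain ⟨n, rfl⟩ : ∃ n, k = n + 1 := by
    obtain ⟨u, hu⟩ := hΔ
    exact Nat.exists_eq_succ_of_ne_zero (e ⟨u, (by omega : 2 ≤ G.degree u)⟩).pos.ne'
  have hk := card_filter_two_le_degree e
  obtain ⟨p, q, hp, hq, hpleaf, hqleaf, hpq⟩ := exists_leaves_adj_ends_of_iso_pathGraph e
  obtain ⟨P, hP, hPspine⟩ :=
    exists_isPath_of_iso_pathGraph e hp hq (not_le.mpr hpleaf) (not_le.mpr hqleaf) hpq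
  have hecc_spine : ∀ v, 2 ≤ G.degree v → ecc3 G v = n + 1 + 1 := fun v hv =>
    hk ▸ hT.ecc3_of_two_le_degree hP hPspine hpleaf hqleaf hpq hv
  have hecc_leaf : ∀ v, ¬ 2 ≤ G.degree v → ecc3 G v = n + 1 + 2 := fun v hv =>
    hk ▸ hT.ecc3_of_degree_lt_two hP hPspine hpleaf hqleaf (hT.three_le_card_degree_lt_two hΔ)
      (not_le.mp hv)
  exact ⟨hecc_spine, fun v hv => hecc_leaf v (by omega),
    aecc3_eq_of_ecc3_eq _ hk hecc_spine hecc_leaf⟩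

theorem stmt_8 {V : Type*} [Fintype V] [DecidableEq V] (G : SimpleGraph V) [DecidableRel G.Adj]
    (hT : G.IsTree) (hn : 4 ≤ Fintype.card V) (hΔ : ∃ v, 3 ≤ G.degree v)
    (k : ℕ) (hk : 1 ≤ k)
    (hspine : Nonempty ((G.induce {v | 2 ≤ G.degree v}) ≃g SimpleGraph.pathGraph k)) :
    (∀ v, 2 ≤ G.degree v → ecc3 G v = k + 1) ∧
    (∀ v, G.degree v = 1 → ecc3 G v = k + 2) ∧
    aecc3 G = (((Fintype.card V : ℚ) - 1) * k + 2 * (Fintype.card V : ℚ)) /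
      (Fintype.card V : ℚ) :=
  stmt_8_general G hT hΔ k hspine
end

section
/- Let π_1 and π_2 be tree degree sequences on n vertices, both with maximum entry at least 3, having s and t entries ≥ 2 respectively. If π_1 majorizes π_2, then the maximal caterpillar values satisfy ((n-1)s + 2n)/n ≤ ((n-1)t + 2n)/n; that is, the maximum average Steiner 3-eccentricity over trees with degree sequence π_1 is at most that over trees with degree sequence π_2. -/
open SimpleGraph Finset

theorem stmt_11 (n s t : ℕ) (hn : 0 < n) (d d' : Fin n → ℕ)
    (hanti : Antitone d) (hanti' : Antitone d')
    (hpos : ∀ i, 1 ≤ d i) (hpos' : ∀ i, 1 ≤ d' i)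
    (hsum : ∑ i, d i = 2 * (n - 1)) (hsum' : ∑ i, d' i = 2 * (n - 1))
    (hmax : 3 ≤ d ⟨0, hn⟩) (hmax' : 3 ≤ d' ⟨0, hn⟩)
    (hs : ∀ i : Fin n, 2 ≤ d i ↔ (i : ℕ) < s)
    (ht : ∀ i : Fin n, 2 ≤ d' i ↔ (i : ℕ) < t)
    (hmaj : Majorizes d d') :
    (((n : ℚ) - 1) * s + 2 * n) / n ≤ (((n : ℚ) - 1) * t + 2 * n) / n :=  by
  have hst : s ≤ t := by
    by_contra h
    push_neg at h
    -- t < n, else all d' i ≥ 2 and the sum is too big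
    have htn : t < n := by
      by_contra hnt
      push_neg at hnt
      have h2 : ∀ i : Fin n, 2 ≤ d' i := fun i =>
        (ht i).2 (lt_of_lt_of_le i.isLt hnt)
      have : 2 * n ≤ ∑ i, d' i := by
        calc 2 * n = ∑ _i : Fin n, 2 := by simp [mul_comm]
        _ ≤ ∑ i, d' i := Finset.sum_le_sum fun i _ => h2 i
      omega
    have hA := hmaj.1 t htn
    set A := Finset.univ.filter (fun i : Fin n => (i : ℕ) < t) with hAdef
    set B := Finset.univ.filter (fun i : Fin n => ¬ (i : ℕ) < t) with hBdef
    have hsplit : ∑ i ∈ A, d i + ∑ i ∈ B, d i = ∑ i, d i :=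
      Finset.sum_filter_add_sum_filter_not _ _ _
    have hsplit' : ∑ i ∈ A, d' i + ∑ i ∈ B, d' i = ∑ i, d' i :=
      Finset.sum_filter_add_sum_filter_not _ _ _
    have hB : ∑ i ∈ B, d' i < ∑ i ∈ B, d i := by
      have hBeq : ∑ i ∈ B, d' i = ∑ i ∈ B, 1 := by
        refine Finset.sum_congr rfl fun i hi => ?_
        have hi' : ¬ (i : ℕ) < t := by simpa [hBdef] using hi
        have h1 := hpos' i
        have h2 : ¬ 2 ≤ d' i := fun h2 => hi' ((ht i).1 h2)
        omega
      rw [hBeq]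
      refine Finset.sum_lt_sum (fun i _ => hpos i) ?_
      refine ⟨⟨t, htn⟩, ?_, ?_⟩
      · simp [hBdef]
      · have : 2 ≤ d ⟨t, htn⟩ := (hs _).2 h
        omega
    have := hmaj.2
    omega
  have hsq : (s : ℚ) ≤ t := by exact_mod_cast hst
  have hn1 : (0:ℚ) ≤ (n : ℚ) - 1 := by
    have : (1:ℚ) ≤ n := by exact_mod_cast hn
    linarith
  have hnq : (0:ℚ) < n := by exact_mod_cast hn
  gcongr
end

section
/- Among all trees T on n vertices (n ≥ 3), the average Steiner 3-eccentricity satisfies aecc_3(T) ≤ n - 1, with equality if and only if T is the path P_n. -/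
open SimpleGraph Finset

/-! A tree on `n` vertices is a connected subgraph of itself with `n - 1` edges, so every Steiner
distance, hence every `ecc3 v`, is at most `n - 1`, and the average equals `n - 1` exactly when
every `ecc3 v` does. If some vertex `w` has degree at least 3, the handshake lemma gives at least
three leaves, so some leaf lies outside any 3-set containing `w`; deleting it leaves a connected
subgraph with `n - 2` edges containing the set, so `ecc3 w < n - 1`. Hence all degrees are at
most 2 and a longest path passes through every vertex: the tree is `P_n`. Conversely, in `P_n`
a 3-set containing both ends can only be spanned by the whole path. -/

namespace SimpleGraph

variable {V : Type*} {G : SimpleGraph V}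

lemma Walk.IsTrail.ncard_edgeSet_s13 {u v : V} {p : G.Walk u v} (hp : p.IsTrail) :
    p.edgeSet.ncard = p.length := by
  classical
  rw [← p.length_edges, ← List.toFinset_card_of_nodup hp.edges_nodup, ← Set.ncard_coe_finset,
    List.coe_toFinset]
  rfl

lemma Connected.connected_top_subgraph (hG : G.Connected) : (⊤ : G.Subgraph).Connected :=
  Subgraph.connected_iff'.mpr (Subgraph.topIso.connected_iff.mpr hG)

lemma pathGraph_walk_val_le {n : ℕ} {i j : Fin n} (p : (pathGraph n).Walk i j) :
    (j : ℕ) ≤ i + p.length := by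
  induction p with
  | nil => simp
  | cons h _ ih => rw [pathGraph_adj] at h; simp only [Walk.length_cons]; omega

lemma Iso.exists_isPath_card_sub_one_le_length [Fintype V] [Nonempty V]
    (f : G ≃g pathGraph (Fintype.card V)) :
    ∃ (a b : V) (q : G.Walk a b), q.IsPath ∧ Fintype.card V - 1 ≤ q.length := by
  have hn := Fintype.card_pos (α := V)
  obtain ⟨r, hr⟩ :=
    (pathGraph_preconnected _ ⟨0, hn⟩ ⟨Fintype.card V - 1, by omega⟩).exists_isPath
  refine ⟨_, _, r.map f.symm.toHom, hr.map f.symm.injective, ?_⟩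
  have := pathGraph_walk_val_le r
  rw [Walk.length_map]
  simp only [zero_add] at this
  omega

section Steiner

variable [Fintype V]

lemma IsTree.ncard_edgeSet_add_one_s13 (hT : G.IsTree) : G.edgeSet.ncard + 1 = Fintype.card V := by
  rw [← Nat.card_coe_set_eq, ← Nat.card_eq_fintype_card]
  exact (isTree_iff_connected_and_card.mp hT).2

lemma steinerDist_le_ncard_edgeSet {S : Set V} {H : G.Subgraph} (hH : H.Connected)
    (hS : S ⊆ H.verts) : steinerDist G S ≤ H.edgeSet.ncard :=
  Nat.sInf_le ⟨H, hH, hS, rfl⟩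

lemma IsTree.steinerDist_le (hT : G.IsTree) (S : Set V) :
    steinerDist G S ≤ Fintype.card V - 1 := by
  have := steinerDist_le_ncard_edgeSet hT.connected.connected_top_subgraph (S.subset_univ)
  have := hT.ncard_edgeSet_add_one_s13
  simp only [Subgraph.edgeSet_top] at *
  omega

lemma IsTree.length_le_steinerDist (hT : G.IsTree) {S : Set V} {a b : V} (ha : a ∈ S)
    (hb : b ∈ S) {q : G.Walk a b} (hq : q.IsPath) : q.length ≤ steinerDist G S := by
  classical
  refine le_csInf ⟨_, ⊤, hT.connected.connected_top_subgraph, by simp, rfl⟩ ?_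
  rintro _ ⟨H, hH, hSH, rfl⟩
  obtain ⟨p, hpH⟩ := (Subgraph.preconnected_iff_forall_exists_walk_subgraph H).1
    hH.preconnected (hSH ha) (hSH hb)
  obtain rfl : q = p.bypass := (hT.existsUnique_path a b).unique hq p.bypass_isPath
  rw [← hq.isTrail.ncard_edgeSet_s13, ← Walk.edgeSet_toSubgraph]
  exact Set.ncard_le_ncard
    (Subgraph.edgeSet_mono (Walk.toSubgraph_bypass_le_toSubgraph.trans hpH))

lemma IsTree.steinerDist_lt_of_degree_eq_one [DecidableRel G.Adj] (hT : G.IsTree) {S : Set V}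
    {ℓ : V} (hℓ : G.degree ℓ = 1) (hS : ℓ ∉ S) : steinerDist G S < Fintype.card V - 1 := by
  obtain ⟨u, hu, -⟩ := degree_eq_one_iff_existsUnique_adj.mp hℓ
  set H := (⊤ : G.Subgraph).induce {ℓ}ᶜ
  have hH : H.Connected :=
    connected_induce_iff.mp (hT.connected.induce_compl_singleton_of_degree_eq_one hℓ)
  have hlt : H.edgeSet.ncard < G.edgeSet.ncard := by
    refine Set.ncard_lt_ncard ⟨fun e he => ?_, fun h => ?_⟩
    · exact H.edgeSet_subset he
    · have := h (G.mem_edgeSet.mpr hu)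
      simp [H] at this
  have := steinerDist_le_ncard_edgeSet hH (S := S) (fun x hx => by rintro rfl; exact hS hx)
  have := hT.ncard_edgeSet_add_one_s13
  omega

end Steiner

section Ecc3

variable [Fintype V]

lemma finite_setOf_steinerDist (G : SimpleGraph V) (v : V) :
    {n | ∃ S : Finset V, v ∈ S ∧ #S = 3 ∧ steinerDist G S = n}.Finite :=
  (Set.finite_range fun S : Finset V => steinerDist G S).subset
    (by rintro _ ⟨S, -, -, rfl⟩; exact ⟨S, rfl⟩)

variable [DecidableEq V]

lemma steinerDist_le_ecc3 {v : V} {S : Finset V} (hv : v ∈ S) (hS : #S = 3) :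
    steinerDist G S ≤ ecc3 G v :=
  le_csSup (finite_setOf_steinerDist G v).bddAbove ⟨S, hv, hS, rfl⟩

lemma exists_steinerDist_eq_ecc3 (h3 : 3 ≤ Fintype.card V) (v : V) :
    ∃ S : Finset V, v ∈ S ∧ #S = 3 ∧ steinerDist G S = ecc3 G v := by
  obtain ⟨S, hvS, hS⟩ := Finset.exists_superset_card_eq (s := {v}) (by simp) h3
  exact Nat.sSup_mem (s := {n | ∃ S : Finset V, v ∈ S ∧ #S = 3 ∧ steinerDist G S = n})
    ⟨_, S, hvS (mem_singleton_self v), hS, rfl⟩ (finite_setOf_steinerDist G v).bddAbove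

lemma IsTree.ecc3_le (hT : G.IsTree) (v : V) : ecc3 G v ≤ Fintype.card V - 1 :=
  csSup_le' (by rintro _ ⟨S, -, -, rfl⟩; exact hT.steinerDist_le _)

lemma IsTree.ecc3_eq_of_iso_pathGraph (hT : G.IsTree) (h3 : 3 ≤ Fintype.card V)
    (f : G ≃g pathGraph (Fintype.card V)) (v : V) : ecc3 G v = Fintype.card V - 1 := by
  have : Nonempty V := Fintype.card_pos_iff.mp (by omega)
  obtain ⟨a, b, q, hq, hlen⟩ := f.exists_isPath_card_sub_one_le_length
  obtain ⟨S, hsub, hS⟩ := Finset.exists_superset_card_eq (s := {a, b, v})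
    ((card_insert_le _ _).trans (Nat.succ_le_succ ((card_insert_le _ _).trans (by simp)))) h3
  refine le_antisymm (hT.ecc3_le v) (hlen.trans ?_)
  calc q.length ≤ steinerDist G S :=
        hT.length_le_steinerDist (hsub (by simp)) (hsub (by simp)) hq
    _ ≤ ecc3 G v := steinerDist_le_ecc3 (hsub (by simp)) hS

end Ecc3

lemma IsTree.three_le_card_leaves [Fintype V] [DecidableRel G.Adj] (hT : G.IsTree) {w : V}
    (hw : 3 ≤ G.degree w) : 3 ≤ #{v | G.degree v = 1} := by
  classical
  obtain ⟨u, hu⟩ := (G.degree_pos_iff_exists_adj w).mp (by omega)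
  have : Nontrivial V := ⟨⟨w, u, hu.ne⟩⟩
  have hpos := hT.connected.preconnected.degree_pos_of_nontrivial
  -- summed over all vertices this reads `2n + 1 ≤ 2(n - 1) + #leaves`
  have key : ∀ v,
      2 + (if v = w then 1 else 0) ≤ G.degree v + if G.degree v = 1 then 1 else 0 := by
    intro v
    have := hpos v
    split_ifs <;> subst_vars <;> omega
  have hsum := Finset.sum_le_sum fun v (_ : v ∈ univ) => key v
  rw [sum_add_distrib, sum_add_distrib, sum_ite_eq' univ w, sum_boole,
    sum_degrees_eq_twice_card_edges] at hsum
  have := hT.card_edgeFinset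
  simp only [sum_const, card_univ, smul_eq_mul, mem_univ, if_true, Nat.cast_id] at hsum
  omega

lemma Walk.IsPath.three_le_degree_getVert [Fintype V] [DecidableRel G.Adj] {u v : V}
    {p : G.Walk u v} (hp : p.IsPath) {k : ℕ} (hk0 : 0 < k) (hk : k < p.length) {y : V}
    (hy : y ∉ p.support) (hadj : G.Adj (p.getVert k) y) : 3 ≤ G.degree (p.getVert k) := by
  classical
  obtain ⟨k, rfl⟩ : ∃ j, k = j + 1 := ⟨k - 1, by omega⟩
  have hne : p.getVert k ≠ p.getVert (k + 2) := fun h => by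
    have := hp.getVert_injOn (by simp; omega) (by simp; omega) h
    omega
  have hsub : ({p.getVert k, p.getVert (k + 2), y} : Finset V) ⊆
      G.neighborFinset (p.getVert (k + 1)) := by
    simp only [insert_subset_iff, singleton_subset_iff, mem_neighborFinset]
    exact ⟨(p.adj_getVert_succ (by omega)).symm, p.adj_getVert_succ hk, hadj⟩
  rw [← card_neighborFinset_eq_degree]
  refine le_of_eq_of_le ?_ (card_le_card hsub)
  rw [card_insert_of_notMem, card_pair]
  · rintro rfl; exact hy (p.getVert_mem_support _)
  · simp only [mem_insert, mem_singleton, not_or]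
    exact ⟨hne, fun h => hy (h ▸ p.getVert_mem_support _)⟩

lemma Connected.exists_isPath_forall_mem_support [Fintype V] [DecidableRel G.Adj]
    (hG : G.Connected) (hdeg : ∀ v, G.degree v ≤ 2) :
    ∃ (u v : V) (p : G.Walk u v), p.IsPath ∧ ∀ x, x ∈ p.support := by
  have := hG.nonempty
  obtain ⟨u, v, p, hp, hmax⟩ := Walk.exists_isPath_forall_isPath_length_le_length G
  refine ⟨u, v, p, hp, fun x => by_contra fun hx => ?_⟩
  obtain ⟨d, -, hd, hd'⟩ := (hG.preconnected x u).some.exists_boundary_dart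
    {y | y ∉ p.support} hx (by simp)
  simp only [Set.mem_ofPred_eq, not_not] at hd hd'
  obtain ⟨k, hk, hkle⟩ := Walk.mem_support_iff_exists_getVert.mp hd'
  rcases Nat.eq_zero_or_pos k with rfl | hk0
  · have h := hmax _ _ _ (hp.cons (u := d.fst) (h := by simpa [← hk] using d.adj) hd)
    simp at h
  rcases hkle.eq_or_lt with rfl | hklt
  · have h := hmax _ _ _ (hp.concat (h := by simpa [← hk] using d.adj.symm) hd)
    simp at h
  have := hp.three_le_degree_getVert hk0 hklt hd (hk ▸ d.adj.symm)
  have := hdeg (p.getVert k)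
  omega

lemma IsTree.nonempty_iso_pathGraph [Fintype V] (hT : G.IsTree) {u v : V} {p : G.Walk u v}
    (hp : p.IsPath) (hall : ∀ x, x ∈ p.support) :
    Nonempty (G ≃g pathGraph (Fintype.card V)) := by
  classical
  have hlen : p.length + 1 = Fintype.card V := by
    rw [← p.length_support, ← List.toFinset_card_of_nodup hp.support_nodup, ← card_univ]
    congr
    ext x
    simp [hall]
  have hedges : p.edgeSet = G.edgeSet :=
    Set.eq_of_subset_of_ncard_le (fun e he => p.edges_subset_edgeSet he)
      (by rw [hp.isTrail.ncard_edgeSet_s13]; have := hT.ncard_edgeSet_add_one_s13; omega)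
  have htop : p.toSubgraph = ⊤ := by
    ext x y
    · simp [hall]
    · rw [← Subgraph.mem_edgeSet, Walk.edgeSet_toSubgraph, hedges, Subgraph.top_adj]
      rfl
  rw [← hlen]
  exact ⟨Subgraph.topIso.symm.trans (htop ▸ hp.pathGraphIsoToSubgraph).symm⟩

section Average

variable [Fintype V] [DecidableEq V] [Nonempty V]

lemma aecc3_le_of_forall_ecc3_le {c : ℕ} (h : ∀ v, ecc3 G v ≤ c) : aecc3 G ≤ c := by
  rw [aecc3, div_le_iff₀ (by positivity)]
  calc ∑ v, (ecc3 G v : ℚ) ≤ ∑ _v : V, (c : ℚ) :=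
        sum_le_sum fun v _ => by exact_mod_cast h v
    _ = c * Fintype.card V := by simp [mul_comm]

lemma aecc3_eq_iff_forall_ecc3_eq {c : ℕ} (h : ∀ v, ecc3 G v ≤ c) :
    aecc3 G = c ↔ ∀ v, ecc3 G v = c := by
  have hsum : (c : ℚ) * Fintype.card V = ∑ _v : V, (c : ℚ) := by simp [mul_comm]
  rw [aecc3, div_eq_iff (by positivity), hsum,
    sum_eq_sum_iff_of_le fun v _ => (by exact_mod_cast h v)]
  simp

end Average

lemma IsTree.forall_ecc3_eq_card_sub_one_iff [Fintype V] [DecidableEq V] (hT : G.IsTree)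
    (h3 : 3 ≤ Fintype.card V) :
    (∀ v, ecc3 G v = Fintype.card V - 1) ↔ Nonempty (G ≃g pathGraph (Fintype.card V)) := by
  classical
  refine ⟨fun hall => ?_, fun ⟨f⟩ => hT.ecc3_eq_of_iso_pathGraph h3 f⟩
  suffices hdeg : ∀ v, G.degree v ≤ 2 by
    obtain ⟨u, v, p, hp, hmem⟩ := hT.connected.exists_isPath_forall_mem_support hdeg
    exact hT.nonempty_iso_pathGraph hp hmem
  intro w
  by_contra! hw
  obtain ⟨S, hwS, hS, hSw⟩ := exists_steinerDist_eq_ecc3 (G := G) h3 w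
  obtain ⟨ℓ, hℓ, hℓS⟩ : ∃ ℓ, G.degree ℓ = 1 ∧ ℓ ∉ S := by
    by_contra! h
    have hsub : ({v | G.degree v = 1} : Finset V) ⊆ S.erase w := fun ℓ hℓ => by
      rw [mem_filter] at hℓ
      exact mem_erase.2 ⟨by rintro rfl; omega, h ℓ hℓ.2⟩
    have := card_le_card hsub
    have := hT.three_le_card_leaves hw
    rw [card_erase_of_mem hwS, hS] at *
    omega
  have := hT.steinerDist_lt_of_degree_eq_one hℓ (S := S) (by simpa using hℓS)
  rw [hSw, hall] at this
  exact lt_irrefl _ this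

end SimpleGraph

theorem stmt_13 {V : Type*} [Fintype V] [DecidableEq V] (G : SimpleGraph V)
    (hT : G.IsTree) (hn : 3 ≤ Fintype.card V) :
    aecc3 G ≤ (Fintype.card V : ℚ) - 1 ∧
    (aecc3 G = (Fintype.card V : ℚ) - 1 ↔
      Nonempty (G ≃g SimpleGraph.pathGraph (Fintype.card V))) := by
  have : Nonempty V := Fintype.card_pos_iff.mp (by omega)
  have hcast : ((Fintype.card V - 1 : ℕ) : ℚ) = Fintype.card V - 1 := by
    rw [Nat.cast_sub (by omega), Nat.cast_one]
  rw [← hcast, aecc3_eq_iff_forall_ecc3_eq hT.ecc3_le, hT.forall_ecc3_eq_card_sub_one_iff hn]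
  exact ⟨aecc3_le_of_forall_ecc3_le hT.ecc3_le, Iff.rfl⟩
end
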